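/- Let (a₁,b₁,m₁) and (a₂,b₂,m₂) be elements of ℝ_{>0} × ℝ^n × O(h), and let (a₃,b₃,m₃) be the unique element of ℝ_{>0} × ℝ^n × O(h) with p(a₃,b₃,m₃) = p(a₁,b₁,m₁) p(a₂,b₂,m₂) (which exists since P is a group bijectively parametrized by ℝ_{>0} × ℝ^n × O(h)). Then for every x ∈ ℝ^n such that D_{a₂,b₂,m₂}(x) ≠ 0 and D_{a₁,b₁,m₁}(φ_{a₂,b₂,m₂}(x)) ≠ 0, one has D_{a₃,b₃,m₃}(x) ≠ 0, φ_{a₃,b₃,m₃}(x) = φ_{a₁,b₁,m₁}(φ_{a₂,b₂,m₂}(x)), and Ω_{a₃,b₃,m₃}(x) = Ω_{a₁,b₁,m₁}(φ_{a₂,b₂,m₂}(x)) · Ω_{a₂,b₂,m₂}(x). -/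

import Mathlib

/-!
`p(a,b,m)` preserves the null cone of `h̃`, and the null vector `ξ(x) = (1, x, -½|x|²)` over `x`
is sent to `D(x) · ξ(φ(x))`: the first two block rows give this by definition of `D` and `φ`,
and the last one is the identity `|m x - ½|x|² d|² = a⁻¹ |x|² D(x)`, which uses `mᵀ h m = h`.
Applying `p₁ p₂ = p₃` to `ξ(x)` and comparing gives `D₃(x) = D₁(φ₂(x)) D₂(x)` from the first
coordinate, and then `φ₃(x) = φ₁(φ₂(x))` since `ξ` is injective.
-/

open Matrix

noncomputable section

abbrev Idx (p q : ℕ) : Type := Unit ⊕ (Fin (p + q)) ⊕ Unit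

/-- The diagonal quadratic form of signature `(p,q)` on `ℝ^n`, `n = p + q`. -/
def hMat (p q : ℕ) : Matrix (Fin (p + q)) (Fin (p + q)) ℝ :=
  Matrix.diagonal fun i => if (i : ℕ) < p then (1 : ℝ) else -1

/-- The quadratic form of signature `(p+1,q+1)` on `ℝ^{n+2}`, in block form
`[[0,0,1],[0,h,0],[1,0,0]]`. -/
def htMat (p q : ℕ) : Matrix (Idx p q) (Idx p q) ℝ :=
  Matrix.of fun I J =>
    match I, J with
    | Sum.inl _, Sum.inr (Sum.inr _) => (1 : ℝ)
    | Sum.inr (Sum.inr _), Sum.inl _ => 1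
    | Sum.inr (Sum.inl i), Sum.inr (Sum.inl j) => hMat p q i j
    | _, _ => 0

/-- The first standard basis vector `e₀` of `ℝ^{n+2}`. -/
def e0 (p q : ℕ) : Idx p q → ℝ := fun I =>
  match I with
  | Sum.inl _ => 1
  | _ => 0

/-- `c = -(2a)⁻¹ b h⁻¹ bᵀ`. -/
def cVal (p q : ℕ) (a : ℝ) (b : Fin (p + q) → ℝ) : ℝ :=
  -(2 * a)⁻¹ * (b ⬝ᵥ ((hMat p q)⁻¹ *ᵥ b))

/-- `d = -a⁻¹ m h⁻¹ bᵀ`. -/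
def dVec (p q : ℕ) (a : ℝ) (b : Fin (p + q) → ℝ)
    (m : Matrix (Fin (p + q)) (Fin (p + q)) ℝ) : Fin (p + q) → ℝ :=
  (-a⁻¹) • (m *ᵥ ((hMat p q)⁻¹ *ᵥ b))

/-- The element `p(a,b,m)` of the parabolic subgroup, in block form
`[[a,b,c],[0,m,d],[0,0,a⁻¹]]`. -/
def pMat (p q : ℕ) (a : ℝ) (b : Fin (p + q) → ℝ)
    (m : Matrix (Fin (p + q)) (Fin (p + q)) ℝ) : Matrix (Idx p q) (Idx p q) ℝ :=
  Matrix.of fun I J =>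
    match I, J with
    | Sum.inl _, Sum.inl _ => a
    | Sum.inl _, Sum.inr (Sum.inl j) => b j
    | Sum.inl _, Sum.inr (Sum.inr _) => cVal p q a b
    | Sum.inr (Sum.inl i), Sum.inr (Sum.inl j) => m i j
    | Sum.inr (Sum.inl i), Sum.inr (Sum.inr _) => dVec p q a b m i
    | Sum.inr (Sum.inr _), Sum.inr (Sum.inr _) => a⁻¹
    | _, _ => 0

/-- `|x|² = xᵀ h x`. -/
def normSq (p q : ℕ) (x : Fin (p + q) → ℝ) : ℝ := x ⬝ᵥ (hMat p q *ᵥ x)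

/-- The denominator `D(x) = a + b x - ½ c |x|²`. -/
def Dden (p q : ℕ) (a : ℝ) (b x : Fin (p + q) → ℝ) : ℝ :=
  a + b ⬝ᵥ x - (1 / 2) * cVal p q a b * normSq p q x

/-- The conformal transformation `φ(x) = (m x - ½|x|² d)/D(x)`. -/
def phiMap (p q : ℕ) (a : ℝ) (b : Fin (p + q) → ℝ)
    (m : Matrix (Fin (p + q)) (Fin (p + q)) ℝ) (x : Fin (p + q) → ℝ) :
    Fin (p + q) → ℝ :=
  (Dden p q a b x)⁻¹ • (m *ᵥ x - ((1 / 2) * normSq p q x) • dVec p q a b m)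

/-- The conformal factor `Ω(x) = D(x)⁻¹`. -/
def OmegaFn (p q : ℕ) (a : ℝ) (b : Fin (p + q) → ℝ) (x : Fin (p + q) → ℝ) : ℝ :=
  (Dden p q a b x)⁻¹

/-- Jacobian matrix of a map at a point: `J i j = ∂ⱼ φⁱ (x)`. -/
def jacobianAt (p q : ℕ) (φ : (Fin (p + q) → ℝ) → (Fin (p + q) → ℝ))
    (x : Fin (p + q) → ℝ) : Matrix (Fin (p + q)) (Fin (p + q)) ℝ :=
  Matrix.of fun i j => fderiv ℝ φ x (Pi.single j 1) i

/-- Row vector of partial derivatives of a scalar function at a point. -/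
def gradAt (p q : ℕ) (f : (Fin (p + q) → ℝ) → ℝ) (x : Fin (p + q) → ℝ) :
    Fin (p + q) → ℝ :=
  fun j => fderiv ℝ f x (Pi.single j 1)

namespace Matrix

variable {ι R : Type*} [Fintype ι] [CommRing R]

theorem IsSymm.dotProduct_mulVec_comm {G : Matrix ι ι R} (hG : G.IsSymm) (u v : ι → R) :
    u ⬝ᵥ (G *ᵥ v) = v ⬝ᵥ (G *ᵥ u) := by
  rw [dotProduct_mulVec, ← mulVec_transpose, hG, dotProduct_comm]

theorem dotProduct_mulVec_mulVec_of_transpose_mul_mul_eq {G m : Matrix ι ι R}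
    (hm : mᵀ * G * m = G) (u v : ι → R) :
    (m *ᵥ u) ⬝ᵥ (G *ᵥ (m *ᵥ v)) = u ⬝ᵥ (G *ᵥ v) := by
  rw [mulVec_mulVec, dotProduct_mulVec, ← vecMul_transpose, vecMul_vecMul, ← mul_assoc, hm,
    ← dotProduct_mulVec]

end Matrix

section

variable {p q : ℕ}

lemma hMat_isSymm : (hMat p q).IsSymm := isSymm_diagonal _

lemma hMat_mul_self : hMat p q * hMat p q = 1 := by
  rw [hMat, diagonal_mul_diagonal, ← diagonal_one]
  congr 1
  funext i
  split_ifs <;> norm_num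

lemma hMat_inv : (hMat p q)⁻¹ = hMat p q := inv_eq_right_inv hMat_mul_self

lemma normSq_smul (c : ℝ) (v : Fin (p + q) → ℝ) : normSq p q (c • v) = c ^ 2 * normSq p q v := by
  simp only [normSq, mulVec_smul, dotProduct_smul, smul_dotProduct, smul_eq_mul]
  ring

def nullLift (x : Fin (p + q) → ℝ) : Idx p q → ℝ :=
  Sum.elim (fun _ => 1) (Sum.elim x fun _ => -(1 / 2) * normSq p q x)

lemma nullLift_injective : Function.Injective (nullLift (p := p) (q := q)) :=
  fun _ _ h => funext fun i => congrFun h (Sum.inr (Sum.inl i))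

lemma normSq_sub_smul_dVec {a : ℝ} (ha : a ≠ 0) (b x : Fin (p + q) → ℝ)
    {m : Matrix (Fin (p + q)) (Fin (p + q)) ℝ} (hm : mᵀ * hMat p q * m = hMat p q) :
    normSq p q (m *ᵥ x - ((1 / 2) * normSq p q x) • dVec p q a b m)
      = a⁻¹ * normSq p q x * Dden p q a b x := by
  have hsymm := (hMat_isSymm (p := p) (q := q)).dotProduct_mulVec_comm
  have hiso := dotProduct_mulVec_mulVec_of_transpose_mul_mul_eq hm
  have hHH : ∀ u v : Fin (p + q) → ℝ, u ⬝ᵥ (hMat p q *ᵥ (hMat p q *ᵥ v)) = u ⬝ᵥ v := by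
    intro u v; rw [mulVec_mulVec, hMat_mul_self, one_mulVec]
  simp only [normSq, Dden, cVal, dVec, hMat_inv, mulVec_sub, mulVec_smul, dotProduct_sub,
    sub_dotProduct, dotProduct_smul, smul_dotProduct, smul_eq_mul, hiso, hHH]
  rw [hsymm (hMat p q *ᵥ b) x, hHH, dotProduct_comm x b, dotProduct_comm (hMat p q *ᵥ b) b]
  field_simp
  ring

lemma pMat_mulVec_nullLift_eq (a : ℝ) (b : Fin (p + q) → ℝ)
    (m : Matrix (Fin (p + q)) (Fin (p + q)) ℝ) (x : Fin (p + q) → ℝ) :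
    pMat p q a b m *ᵥ nullLift x = Sum.elim (fun _ => Dden p q a b x)
      (Sum.elim (m *ᵥ x - ((1 / 2) * normSq p q x) • dVec p q a b m)
        fun _ => -(1 / 2) * a⁻¹ * normSq p q x) := by
  funext I
  rcases I with ⟨⟨⟩⟩ | i | ⟨⟨⟩⟩ <;>
    simp [pMat, nullLift, mulVec, dotProduct, Fintype.sum_sum_type, Dden] <;> ring

lemma pMat_mulVec_nullLift {a : ℝ} (ha : a ≠ 0) (b : Fin (p + q) → ℝ)
    {m : Matrix (Fin (p + q)) (Fin (p + q)) ℝ} (hm : mᵀ * hMat p q * m = hMat p q)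
    {x : Fin (p + q) → ℝ} (hD : Dden p q a b x ≠ 0) :
    pMat p q a b m *ᵥ nullLift x = Dden p q a b x • nullLift (phiMap p q a b m x) := by
  have hφ : normSq p q (phiMap p q a b m x) = normSq p q x / (a * Dden p q a b x) := by
    rw [phiMap, normSq_smul, normSq_sub_smul_dVec ha b x hm]
    field_simp
  rw [pMat_mulVec_nullLift_eq]
  funext I
  rcases I with ⟨⟨⟩⟩ | i | ⟨⟨⟩⟩
  · simp [nullLift]
  · simp [nullLift, phiMap, hD]
  · simp only [nullLift, Sum.elim_inr, hφ, Pi.smul_apply, smul_eq_mul]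
    field_simp

end

theorem statement5_general (p q : ℕ)
    (a₁ a₂ a₃ : ℝ) (ha₁ : 0 < a₁) (ha₂ : 0 < a₂) (ha₃ : 0 < a₃)
    (b₁ b₂ b₃ : Fin (p + q) → ℝ)
    (m₁ m₂ m₃ : Matrix (Fin (p + q)) (Fin (p + q)) ℝ)
    (hm₁ : m₁ᵀ * hMat p q * m₁ = hMat p q)
    (hm₂ : m₂ᵀ * hMat p q * m₂ = hMat p q)
    (hm₃ : m₃ᵀ * hMat p q * m₃ = hMat p q)
    (hprod : pMat p q a₃ b₃ m₃ = pMat p q a₁ b₁ m₁ * pMat p q a₂ b₂ m₂)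
    (x : Fin (p + q) → ℝ)
    (hx₂ : Dden p q a₂ b₂ x ≠ 0)
    (hx₁ : Dden p q a₁ b₁ (phiMap p q a₂ b₂ m₂ x) ≠ 0) :
    Dden p q a₃ b₃ x ≠ 0 ∧
    phiMap p q a₃ b₃ m₃ x = phiMap p q a₁ b₁ m₁ (phiMap p q a₂ b₂ m₂ x) ∧
    OmegaFn p q a₃ b₃ x
      = OmegaFn p q a₁ b₁ (phiMap p q a₂ b₂ m₂ x) * OmegaFn p q a₂ b₂ x := by
  set y := phiMap p q a₂ b₂ m₂ x
  have hcomp : pMat p q a₃ b₃ m₃ *ᵥ nullLift x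
      = (Dden p q a₁ b₁ y * Dden p q a₂ b₂ x) • nullLift (phiMap p q a₁ b₁ m₁ y) := by
    rw [hprod, ← mulVec_mulVec, pMat_mulVec_nullLift ha₂.ne' b₂ hm₂ hx₂, mulVec_smul,
      pMat_mulVec_nullLift ha₁.ne' b₁ hm₁ hx₁, smul_smul, mul_comm]
  have hD : Dden p q a₃ b₃ x = Dden p q a₁ b₁ y * Dden p q a₂ b₂ x := by
    have h := congrFun hcomp (Sum.inl ())
    rw [pMat_mulVec_nullLift_eq] at h
    simpa [nullLift] using h
  have hD₀ : Dden p q a₃ b₃ x ≠ 0 := hD ▸ mul_ne_zero hx₁ hx₂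
  have hlift : Dden p q a₃ b₃ x • nullLift (phiMap p q a₃ b₃ m₃ x)
      = Dden p q a₃ b₃ x • nullLift (phiMap p q a₁ b₁ m₁ y) := by
    rw [← pMat_mulVec_nullLift ha₃.ne' b₃ hm₃ hD₀, hcomp, hD]
  refine ⟨hD₀, nullLift_injective (smul_right_injective _ hD₀ hlift), ?_⟩
  rw [OmegaFn, OmegaFn, OmegaFn, hD, mul_inv]

/-- The parametrization of `P` by `ℝ₊ × ℝⁿ × O(h)` intertwines the group law of
`P` with composition of the conformal transformations `φ` and the cocycle law
for the conformal factors `Ω`. -/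
theorem statement5 (p q : ℕ) (hn : 3 ≤ p + q)
    (a₁ a₂ a₃ : ℝ) (ha₁ : 0 < a₁) (ha₂ : 0 < a₂) (ha₃ : 0 < a₃)
    (b₁ b₂ b₃ : Fin (p + q) → ℝ)
    (m₁ m₂ m₃ : Matrix (Fin (p + q)) (Fin (p + q)) ℝ)
    (hm₁ : m₁ᵀ * hMat p q * m₁ = hMat p q)
    (hm₂ : m₂ᵀ * hMat p q * m₂ = hMat p q)
    (hm₃ : m₃ᵀ * hMat p q * m₃ = hMat p q)
    (hprod : pMat p q a₃ b₃ m₃ = pMat p q a₁ b₁ m₁ * pMat p q a₂ b₂ m₂)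
    (x : Fin (p + q) → ℝ)
    (hx₂ : Dden p q a₂ b₂ x ≠ 0)
    (hx₁ : Dden p q a₁ b₁ (phiMap p q a₂ b₂ m₂ x) ≠ 0) :
    Dden p q a₃ b₃ x ≠ 0 ∧
    phiMap p q a₃ b₃ m₃ x = phiMap p q a₁ b₁ m₁ (phiMap p q a₂ b₂ m₂ x) ∧
    OmegaFn p q a₃ b₃ x
      = OmegaFn p q a₁ b₁ (phiMap p q a₂ b₂ m₂ x) * OmegaFn p q a₂ b₂ x :=
  statement5_general p q a₁ a₂ a₃ ha₁ ha₂ ha₃ b₁ b₂ b₃ m₁ m₂ m₃ hm₁ hm₂ hm₃ hprod x hx₂ hx₁
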